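/- arXiv:2004.04651 — 3 statements merged into one kernel-verified Lean document; each statement's English description precedes it below -/
import Mathlib

section
/- For any g ∈ S_m and h ∈ S_n, with ind taken with respect to the embedding S_m × S_n ↪ S_{mn} via the product action, one has ind(g, e) = ind(g)·n ≤ ind(g, h). -/
open Equiv Equiv.Perm

/-- Setoid for the same-cycle relation. -/
def scSetoid {α : Type*} (σ : Equiv.Perm α) : Setoid α :=
  ⟨σ.SameCycle, ⟨Equiv.Perm.SameCycle.refl σ, fun h => h.symm, fun h1 h2 => h1.trans h2⟩⟩


/-- The multiset of all cycle lengths of a permutation, counting fixed points as 1-cycles. -/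
def fullCycleType {α : Type*} [Fintype α] [DecidableEq α] (σ : Equiv.Perm α) : Multiset ℕ :=
  σ.cycleType + Multiset.replicate (Fintype.card α - σ.support.card) 1

/-- The number of cycles of a permutation (fixed points counted as 1-cycles),
i.e. the number of orbits of the cyclic group it generates. -/
def cycleCount {α : Type*} [Fintype α] [DecidableEq α] (σ : Equiv.Perm α) : ℕ :=
  Multiset.card (fullCycleType σ)

/-- `ind σ = N - (number of cycles of σ)` for `σ` a permutation of a set of size `N`. -/
def ind {α : Type*} [Fintype α] [DecidableEq α] (σ : Equiv.Perm α) : ℕ :=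
  Fintype.card α - cycleCount σ


def rawFun {α : Type*} [Fintype α] [DecidableEq α] (σ : Equiv.Perm α) (a : α) :
    (σ.cycleFactorsFinset : Finset (Equiv.Perm α)) ⊕ {x // σ x = x} :=
  if h : σ a = a then Sum.inr ⟨a, h⟩ else
    Sum.inl ⟨σ.cycleOf a, (σ.cycleOf_mem_cycleFactorsFinset_iff).2 (Equiv.Perm.mem_support.2 h)⟩

def quotFun {α : Type*} [Fintype α] [DecidableEq α] (σ : Equiv.Perm α) :
    Quotient (scSetoid σ) → (σ.cycleFactorsFinset : Finset (Equiv.Perm α)) ⊕ {x // σ x = x} :=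
  Quotient.lift (rawFun σ)
    (by
      intro a b hab'
      have hab : σ.SameCycle a b := hab'
      unfold rawFun
      by_cases ha : σ a = a
      · obtain rfl := hab.eq_of_left ha
        rfl
      · have hb : ¬ σ b = b := fun hb => ha (hab.symm.eq_of_left hb ▸ hb)
        rw [dif_neg ha, dif_neg hb]
        simp only [Sum.inl.injEq, Subtype.mk.injEq]
        exact hab.cycleOf_eq)

lemma quotFun_bij {α : Type*} [Fintype α] [DecidableEq α] (σ : Equiv.Perm α) :
    Function.Bijective (quotFun σ) := by
  constructor
  · rintro ⟨a⟩ ⟨b⟩ hab0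
    have hab : rawFun σ a = rawFun σ b := hab0
    unfold rawFun at hab
    by_cases ha : σ a = a <;> by_cases hb : σ b = b
    · rw [dif_pos ha, dif_pos hb] at hab
      obtain rfl : a = b := by simpa using hab
      rfl
    · rw [dif_pos ha, dif_neg hb] at hab
      exact absurd hab (by simp)
    · rw [dif_neg ha, dif_pos hb] at hab
      exact absurd hab (by simp)
    · rw [dif_neg ha, dif_neg hb] at hab
      apply Quotient.sound
      have hco : σ.cycleOf a = σ.cycleOf b := by simpa using hab
      have hbmem : b ∈ (σ.cycleOf a).support := by
        rw [hco]
        exact Equiv.Perm.mem_support_cycleOf_iff.2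
          ⟨Equiv.Perm.SameCycle.refl σ b, Equiv.Perm.mem_support.2 hb⟩
      exact (Equiv.Perm.mem_support_cycleOf_iff.1 hbmem).1
  · rintro (⟨c, hc⟩ | ⟨a, ha⟩)
    · have hcyc : c.IsCycle := (Equiv.Perm.mem_cycleFactorsFinset_iff.mp hc).1
      obtain ⟨x, hx⟩ := hcyc.nonempty_support
      refine ⟨Quotient.mk _ x, ?_⟩
      have hxσ : x ∈ σ.support := Equiv.Perm.mem_cycleFactorsFinset_support_le hc hx
      have hfix : ¬ σ x = x := Equiv.Perm.mem_support.1 hxσ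
      show rawFun σ x = _
      unfold rawFun
      rw [dif_neg hfix]
      simp only [Sum.inl.injEq, Subtype.mk.injEq]
      exact (Equiv.Perm.cycle_is_cycleOf hx hc).symm
    · refine ⟨Quotient.mk _ a, ?_⟩
      show rawFun σ a = _
      unfold rawFun
      rw [dif_pos ha]

lemma cycleCount_eq_card_quot {α : Type*} [Fintype α] [DecidableEq α] (σ : Equiv.Perm α) :
    cycleCount σ = Nat.card (Quotient (scSetoid σ)) := by
  have h1 : Nat.card (Quotient (scSetoid σ)) =
      σ.cycleFactorsFinset.card + Fintype.card {x // σ x = x} := by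
    rw [Nat.card_eq_of_bijective _ (quotFun_bij σ), Nat.card_sum, Nat.card_eq_fintype_card,
      Nat.card_eq_fintype_card, Fintype.card_coe]
  have hsupp : σ.support = Finset.univ.filter (fun x => ¬ σ x = x) := by
    ext x; simp [Equiv.Perm.mem_support]
  have hle : σ.support.card ≤ Fintype.card α := Finset.card_le_univ _
  have h2 : Fintype.card {x // σ x = x} + σ.support.card = Fintype.card α := by
    rw [Fintype.card_subtype, hsupp]
    have := Finset.card_filter_add_card_filter_not (s := (Finset.univ : Finset α))
      (p := fun x => σ x = x)
    rw [Finset.card_univ] at this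
    omega
  have h3 : Multiset.card σ.cycleType = σ.cycleFactorsFinset.card := by
    simp [Equiv.Perm.cycleType]
  simp only [cycleCount, fullCycleType, Multiset.card_add, Multiset.card_replicate]
  omega

lemma cycleCount_le_card {α : Type*} [Fintype α] [DecidableEq α] (σ : Equiv.Perm α) :
    cycleCount σ ≤ Fintype.card α := by
  rw [cycleCount_eq_card_quot, ← Nat.card_eq_fintype_card]
  exact Nat.card_le_card_of_injective _ Quotient.out_injective

lemma prodCongr_zpow {β γ : Type*} (g : Equiv.Perm β) (h : Equiv.Perm γ) (i : ℤ) :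
    (g.prodCongr h) ^ i = (g ^ i).prodCongr (h ^ i) := by
  let φ : Equiv.Perm β × Equiv.Perm γ →* Equiv.Perm (β × γ) :=
    { toFun := fun p => p.1.prodCongr p.2
      map_one' := Equiv.ext fun x => rfl
      map_mul' := fun p q => Equiv.ext fun x => rfl }
  have h1 : (g.prodCongr h) ^ i = φ ((g, h) ^ i) := (map_zpow φ (g, h) i).symm
  have h2 : ((g, h) : Equiv.Perm β × Equiv.Perm γ) ^ i = (g ^ i, h ^ i) := by
    ext x <;> simp
  rw [h1, h2]; rfl

lemma prodCongr_zpow_apply {β γ : Type*} (g : Equiv.Perm β) (h : Equiv.Perm γ) (i : ℤ)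
    (p : β × γ) : ((g.prodCongr h) ^ i) p = ((g ^ i) p.1, (h ^ i) p.2) := by
  rw [prodCongr_zpow]; rfl

lemma cycleCount_prodCongr_one {m n : ℕ} (g : Equiv.Perm (Fin m)) :
    cycleCount (g.prodCongr (1 : Equiv.Perm (Fin n))) = cycleCount g * n := by
  rw [cycleCount_eq_card_quot, cycleCount_eq_card_quot]
  have hcard : Nat.card (Quotient (scSetoid g)) * n
      = Nat.card (Quotient (scSetoid g) × Fin n) := by
    simp [Nat.card_prod]
  rw [hcard]
  have wd : ∀ (p q : Fin m × Fin n), (scSetoid (g.prodCongr (1 : Equiv.Perm (Fin n)))).r p q →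
      ((Quotient.mk (scSetoid g) p.1, p.2) : Quotient (scSetoid g) × Fin n)
        = (Quotient.mk (scSetoid g) q.1, q.2) := by
    rintro p q ⟨i, hi⟩
    rw [prodCongr_zpow_apply] at hi
    have h1 : (g ^ i) p.1 = q.1 := congrArg Prod.fst hi
    have h2 : p.2 = q.2 := by
      have := congrArg Prod.snd hi
      simpa using this
    exact Prod.ext (Quotient.sound ⟨i, h1⟩) h2
  apply Nat.card_eq_of_bijective (Quotient.lift _ wd)
  constructor
  · rintro ⟨⟨a, b⟩⟩ ⟨⟨a', b'⟩⟩ heq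
    obtain ⟨h1, h2⟩ := Prod.mk.inj
      (show ((Quotient.mk (scSetoid g) a : Quotient (scSetoid g)), b)
        = (Quotient.mk (scSetoid g) a', b') from heq)
    obtain ⟨i, hi⟩ : g.SameCycle a a' := Quotient.exact h1
    apply Quotient.sound
    exact ⟨i, by rw [prodCongr_zpow_apply]; simp [hi, h2]⟩
  · rintro ⟨c, b⟩
    obtain ⟨a, rfl⟩ := c.exists_rep
    exact ⟨Quotient.mk _ (a, b), rfl⟩

lemma cycleCount_prodCongr_le {m n : ℕ} (g : Equiv.Perm (Fin m)) (h : Equiv.Perm (Fin n)) :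
    cycleCount (g.prodCongr h) ≤ cycleCount g * n := by
  rw [cycleCount_eq_card_quot, cycleCount_eq_card_quot]
  have hcard : Nat.card (Quotient (scSetoid g)) * n
      = Nat.card (Quotient (scSetoid g) × Fin n) := by
    simp [Nat.card_prod]
  rw [hcard]
  have spec : ∀ O : Quotient (scSetoid (g.prodCongr h)),
      ∃ i : ℤ, (g ^ i) O.out.1 = (Quotient.mk (scSetoid g) O.out.1).out :=
    fun O => Quotient.exact (Quotient.out_eq (Quotient.mk (scSetoid g) O.out.1)).symm
  set F : Quotient (scSetoid (g.prodCongr h)) → Quotient (scSetoid g) × Fin n :=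
    fun O => (Quotient.mk (scSetoid g) O.out.1,
      (h ^ (Classical.choose (spec O))) O.out.2) with hF
  apply Nat.card_le_card_of_injective F
  intro O O' heq
  obtain ⟨h1, h2⟩ := Prod.mk.inj heq
  have s1 := Classical.choose_spec (spec O)
  have s2 := Classical.choose_spec (spec O')
  have key : ((g.prodCongr h) ^ (Classical.choose (spec O))) O.out
      = ((g.prodCongr h) ^ (Classical.choose (spec O'))) O'.out := by
    rw [prodCongr_zpow_apply, prodCongr_zpow_apply]
    exact Prod.ext (s1.trans ((s2.trans (congrArg Quotient.out h1.symm)).symm)) h2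
  have hsc : Equiv.Perm.SameCycle (g.prodCongr h) O.out O'.out :=
    (Equiv.Perm.SameCycle.trans ⟨Classical.choose (spec O), key⟩
      (Equiv.Perm.SameCycle.symm ⟨Classical.choose (spec O'), rfl⟩))
  rw [← Quotient.out_eq O, ← Quotient.out_eq O']
  exact Quotient.sound hsc

theorem stmt_2 {m n : ℕ} (g : Equiv.Perm (Fin m)) (h : Equiv.Perm (Fin n)) :
    ind (g.prodCongr (1 : Equiv.Perm (Fin n))) = ind g * n ∧
    ind g * n ≤ ind (g.prodCongr h) := by
  have hcard : Fintype.card (Fin m × Fin n) = m * n := by simp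
  have hle : cycleCount g ≤ m := by
    simpa using cycleCount_le_card g
  constructor
  · rw [ind, ind, hcard, cycleCount_prodCongr_one, Fintype.card_fin, Nat.sub_mul]
  · rw [ind, ind, hcard, Fintype.card_fin, Nat.sub_mul]
    exact Nat.sub_le_sub_left (cycleCount_prodCongr_le g h) (m * n)
end

section
/- For g ∈ S_m with cycles c_1,…,c_r and h ∈ S_n, equality ind(g,e) = ind(g,h) holds (with respect to the product action embedding into S_{mn}) if and only if the order of h divides gcd_i(|c_i|), i.e. ord(h) divides the length of every cycle of g. -/
/-!
Every point `x` lies on a cycle of length `period σ x`, so each cycle contributes `1` to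
`∑ₓ 1 / period σ x`, and this sum is the number of cycles. The point `(x, y)` has period
`lcm (period g x) (period h y)` under `(g, h)`, which is at least `period g x`, its period under
`(g, 1)`. Hence `(g, h)` has at most as many cycles as `(g, 1)`, with equality iff
`period h y ∣ period g x` for all `x, y`, i.e. iff `orderOf h` divides every cycle length of `g`.
-/

open MulAction Finset

namespace Equiv.Perm

variable {α β : Type*}

lemma period_pos [Finite α] (σ : Perm α) (x : α) : 0 < period σ x :=
  period_pos_of_orderOf_pos (orderOf_pos σ) x

lemma orderOf_dvd_iff_forall_period_dvd (σ : Perm α) (k : ℕ) :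
    orderOf σ ∣ k ↔ ∀ x : α, period σ x ∣ k := by
  simp only [orderOf_dvd_iff_pow_eq_one, Perm.ext_iff, Perm.one_apply, ← pow_smul_eq_iff_period_dvd,
    Perm.smul_def]

lemma period_prodCongr (g : Perm α) (h : Perm β) (z : α × β) :
    period (g.prodCongr h) z = Nat.lcm (period g z.1) (period h z.2) :=
  Function.minimalPeriod_prodMap g h z

variable [Fintype α] [DecidableEq α]

lemma period_eq_orderOf_cycleOf (σ : Perm α) (x : α) : period σ x = orderOf (σ.cycleOf x) := by
  refine Nat.dvd_right_iff_eq.1 fun k => ?_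
  rw [← pow_smul_eq_iff_period_dvd, Perm.smul_def, ← cycleOf_pow_apply_self,
    orderOf_dvd_iff_pow_eq_one]
  by_cases hx : σ x = x
  · simp [(cycleOf_eq_one_iff σ).2 hx]
  · exact ((σ.isCycle_cycleOf hx).pow_eq_one_iff' (by rwa [cycleOf_apply_self])).symm

lemma period_eq_card_support_cycleOf {σ : Perm α} {x : α} (hx : σ x ≠ x) :
    period σ x = #(σ.cycleOf x).support := by
  rw [period_eq_orderOf_cycleOf, (σ.isCycle_cycleOf hx).orderOf]

lemma sum_support_inv_period (σ : Perm α) :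
    ∑ x ∈ σ.support, (period σ x : ℚ)⁻¹ = Multiset.card σ.cycleType := by
  rw [← sum_fiberwise_of_maps_to fun x hx => cycleOf_mem_cycleFactorsFinset_iff.2 hx,
    cycleType_def, Multiset.card_map, ← Finset.card_def, card_eq_sum_ones, Nat.cast_sum]
  refine sum_congr rfl fun c hc => ?_
  have hfiber : {x ∈ σ.support | σ.cycleOf x = c} = c.support := by
    ext x
    rw [mem_filter, eq_comm, eq_cycleOf_of_mem_cycleFactorsFinset_iff σ c hc]
    exact ⟨And.right, fun hx => ⟨mem_cycleFactorsFinset_support_le hc hx, hx⟩⟩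
  have hcard : ∀ x ∈ c.support, period σ x = #c.support := fun x hx => by
    rw [period_eq_card_support_cycleOf (mem_support.1 (mem_cycleFactorsFinset_support_le hc hx)),
      ← cycle_is_cycleOf hx hc]
  have hpos : (#c.support : ℚ) ≠ 0 := by
    exact_mod_cast (card_pos.2 (mem_cycleFactorsFinset_iff.1 hc).1.nonempty_support).ne'
  rw [hfiber, sum_congr rfl fun x hx => by rw [hcard x hx], sum_const, nsmul_eq_mul,
    mul_inv_cancel₀ hpos, Nat.cast_one]

lemma cycleCount_eq_sum_inv_period (σ : Perm α) :
    (cycleCount σ : ℚ) = ∑ x : α, (period σ x : ℚ)⁻¹ := by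
  have hfixed : ∀ x ∈ σ.supportᶜ, (period σ x : ℚ)⁻¹ = 1 := fun x hx => by
    rw [period_eq_one_iff.2 (by simpa using hx), Nat.cast_one, inv_one]
  rw [← sum_add_sum_compl σ.support, sum_support_inv_period, sum_congr rfl hfixed, sum_const,
    card_compl, cycleCount, fullCycleType, Multiset.card_add, Multiset.card_replicate]
  simp

-- `fullCycleType σ` is definitionally `σ.partition.parts`, a partition of `Fintype.card α`.
lemma cycleCount_le_card (σ : Perm α) : cycleCount σ ≤ Fintype.card α := by
  have h := Multiset.card_nsmul_le_sum (a := 1) fun _ hc => σ.partition.parts_pos hc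
  rwa [smul_eq_mul, mul_one, σ.partition.parts_sum] at h

lemma mem_fullCycleType_iff {σ : Perm α} {c : ℕ} :
    c ∈ fullCycleType σ ↔ ∃ x : α, period σ x = c := by
  have hfixed : Fintype.card α - #σ.support ≠ 0 ↔ ∃ x, σ x = x := by
    rw [← card_compl, Nat.ne_zero_iff_zero_lt, card_pos]
    simp [Finset.Nonempty]
  rw [fullCycleType, Multiset.mem_add, cycleType_def, Multiset.mem_map, Multiset.mem_replicate,
    hfixed]
  constructor
  · rintro (⟨f, hf, rfl⟩ | ⟨⟨x, hx⟩, rfl⟩)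
    · obtain ⟨x, hx⟩ := (mem_cycleFactorsFinset_iff.1 hf).1.nonempty_support
      refine ⟨x, ?_⟩
      rw [period_eq_card_support_cycleOf (mem_support.1 (mem_cycleFactorsFinset_support_le hf hx)),
        ← cycle_is_cycleOf hx hf]
      rfl
    · exact ⟨x, period_eq_one_iff.2 hx⟩
  · rintro ⟨x, rfl⟩
    by_cases hx : σ x = x
    · exact Or.inr ⟨⟨x, hx⟩, period_eq_one_iff.2 hx⟩
    · refine Or.inl ⟨σ.cycleOf x, cycleOf_mem_cycleFactorsFinset_iff.2 (mem_support.2 hx), ?_⟩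
      rw [period_eq_card_support_cycleOf hx]
      rfl

lemma ind_eq_ind_iff {σ τ : Perm α} : ind σ = ind τ ↔ cycleCount σ = cycleCount τ := by
  have := σ.cycleCount_le_card
  have := τ.cycleCount_le_card
  unfold ind
  omega

variable [Fintype β] [DecidableEq β]

lemma cycleCount_prodCongr_eq_iff (g : Perm α) (h : Perm β) :
    cycleCount (g.prodCongr h) = cycleCount (g.prodCongr (1 : Perm β)) ↔
      ∀ (x : α) (y : β), period h y ∣ period g x := by
  have hle : ∀ z ∈ (univ : Finset (α × β)),
      (Nat.lcm (period g z.1) (period h z.2) : ℚ)⁻¹ ≤ (period g z.1 : ℚ)⁻¹ := fun z _ => by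
    gcongr
    · exact_mod_cast period_pos g z.1
    · exact Nat.le_of_dvd (Nat.lcm_pos (period_pos g z.1) (period_pos h z.2))
        (Nat.dvd_lcm_left _ _)
  rw [← Nat.cast_inj (R := ℚ), cycleCount_eq_sum_inv_period, cycleCount_eq_sum_inv_period]
  simp only [period_prodCongr, period_one, Nat.lcm_one_right]
  rw [sum_eq_sum_iff_of_le hle]
  simp only [mem_univ, inv_inj, Nat.cast_inj, Nat.lcm_eq_left_iff_dvd, true_imp_iff, Prod.forall]

end Equiv.Perm

theorem stmt_3 {m n : ℕ} (g : Equiv.Perm (Fin m)) (h : Equiv.Perm (Fin n)) :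
    ind (g.prodCongr (1 : Equiv.Perm (Fin n))) = ind (g.prodCongr h) ↔
    ∀ c ∈ fullCycleType g, orderOf h ∣ c := by
  rw [Equiv.Perm.ind_eq_ind_iff, eq_comm, Equiv.Perm.cycleCount_prodCongr_eq_iff]
  simp only [Equiv.Perm.orderOf_dvd_iff_forall_period_dvd, Equiv.Perm.mem_fullCycleType_iff,
    forall_exists_index, forall_apply_eq_imp_iff]
end

section
/- Let A be a finite abelian group, regarded as a subgroup of S_{|A|} via the regular representation, let g = (1 2 3) be a 3-cycle in S_3, and let h be a nontrivial element of A. Then equality ind(g)·|A| = ind(g,h) holds if and only if ord(h) = 3. -/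
open Equiv Function

lemma minPeriod_eq {α : Type*} (f : α → α) (x : α) (L : ℕ) (_hL : 0 < L)
    (H : ∀ n, f^[n] x = x ↔ L ∣ n) : Function.minimalPeriod f x = L :=
  Nat.dvd_antisymm (IsPeriodicPt.minimalPeriod_dvd ((H L).mpr dvd_rfl))
    ((H _).mp iterate_minimalPeriod)

lemma minPeriod_mulLeft {A : Type*} [Group A] [Fintype A] (h : A) (a : A) :
    Function.minimalPeriod ⇑(Equiv.mulLeft h) a = orderOf h := by
  refine minPeriod_eq _ _ _ (orderOf_pos h) (fun n => ?_)
  rw [Equiv.Perm.iterate_eq_pow, Equiv.pow_mulLeft, Equiv.coe_mulLeft,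
    mul_eq_right, orderOf_dvd_iff_pow_eq_one]

lemma minPeriod_isCycle {α : Type*} [Fintype α] [DecidableEq α] {f : Equiv.Perm α} {x : α}
    (hf : f.IsCycle) (hx : x ∈ f.support) :
    Function.minimalPeriod ⇑f x = orderOf f := by
  refine minPeriod_eq _ _ _ (orderOf_pos f) (fun n => ?_)
  rw [Equiv.Perm.iterate_eq_pow]
  constructor
  · intro hfx
    by_contra hdvd
    have := (hf.support_pow_eq_iff.mpr hdvd) ▸ hx
    exact (Equiv.Perm.mem_support.mp this) hfx
  · intro hdvd
    rw [orderOf_dvd_iff_pow_eq_one] at hdvd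
    simp [hdvd]

lemma card_support_cycleOf_eq_minPeriod {α : Type*} [Fintype α] [DecidableEq α]
    (f : Equiv.Perm α) (x : α) (hx : f x ≠ x) :
    (f.cycleOf x).support.card = Function.minimalPeriod ⇑f x := by
  have hc : (f.cycleOf x).IsCycle := Equiv.Perm.isCycle_cycleOf f hx
  have hxs : x ∈ (f.cycleOf x).support := by
    rw [Equiv.Perm.mem_support, Equiv.Perm.cycleOf_apply_self]; exact hx
  have h1 : Function.minimalPeriod ⇑(f.cycleOf x) x = orderOf (f.cycleOf x) :=
    minPeriod_isCycle hc hxs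
  have h2 : Function.minimalPeriod ⇑(f.cycleOf x) x = Function.minimalPeriod ⇑f x := by
    rw [Function.minimalPeriod_eq_minimalPeriod_iff]
    intro n
    unfold Function.IsPeriodicPt Function.IsFixedPt
    rw [Equiv.Perm.iterate_eq_pow, Equiv.Perm.iterate_eq_pow,
      Equiv.Perm.cycleOf_pow_apply_self]
  rw [← h2, h1, hc.orderOf]

section
variable {A : Type*} [CommGroup A] [Fintype A] [DecidableEq A]

lemma minPeriod_sigma (g : Equiv.Perm (Fin 3)) (hg : g.IsThreeCycle) (h : A) (x : Fin 3 × A) :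
    Function.minimalPeriod ⇑(g.prodCongr (Equiv.mulLeft h)) x = Nat.lcm 3 (orderOf h) := by
  have hsupp : g.support = Finset.univ := by
    apply Finset.eq_univ_of_card
    rw [hg.card_support, Fintype.card_fin]
  have hcoe : ⇑(g.prodCongr (Equiv.mulLeft h)) = Prod.map ⇑g ⇑(Equiv.mulLeft h) := by
    funext p; rfl
  rw [hcoe, Function.minimalPeriod_prodMap, minPeriod_mulLeft,
    minPeriod_isCycle hg.isCycle (hsupp ▸ Finset.mem_univ _), hg.orderOf]

lemma cycleCount_sigma (g : Equiv.Perm (Fin 3)) (hg : g.IsThreeCycle) (h : A) (hh : h ≠ 1) :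
    Multiset.card (Equiv.Perm.cycleType (g.prodCongr (Equiv.mulLeft h))) * Nat.lcm 3 (orderOf h)
      = 3 * Fintype.card A ∧
      Equiv.Perm.support (g.prodCongr (Equiv.mulLeft h)) = Finset.univ := by
  set σ : Equiv.Perm (Fin 3 × A) := g.prodCongr (Equiv.mulLeft h) with hσ
  set L := Nat.lcm 3 (orderOf h) with hL
  have hgsupp : g.support = Finset.univ := by
    apply Finset.eq_univ_of_card
    rw [hg.card_support, Fintype.card_fin]
  have hfix : ∀ x, σ x ≠ x := by
    intro x hx
    have h1 : g x.1 = x.1 := congrArg Prod.fst hx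
    exact Equiv.Perm.mem_support.mp (hgsupp ▸ Finset.mem_univ x.1) h1
  have hsupp : Equiv.Perm.support σ = Finset.univ :=
    Finset.eq_univ_of_forall (fun x => Equiv.Perm.mem_support.mpr (hfix x))
  have hall : ∀ n ∈ Equiv.Perm.cycleType σ, n = L := by
    intro n hn
    rw [Equiv.Perm.cycleType_def, Multiset.mem_map] at hn
    obtain ⟨c, hc, rfl⟩ := hn
    rw [← Finset.mem_def] at hc
    obtain ⟨a, ha, -⟩ := (Equiv.Perm.mem_cycleFactorsFinset_iff.mp hc).1
    have has : a ∈ c.support := Equiv.Perm.mem_support.mpr ha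
    have hceq : c = Equiv.Perm.cycleOf σ a := Equiv.Perm.cycle_is_cycleOf has hc
    simp only [Function.comp_apply]
    rw [hceq, card_support_cycleOf_eq_minPeriod σ a (hfix a), minPeriod_sigma g hg h a]
  have hrep := Multiset.eq_replicate_card.mpr hall
  have hsum := Equiv.Perm.sum_cycleType σ
  rw [hsupp, Finset.card_univ, Fintype.card_prod, Fintype.card_fin] at hsum
  constructor
  · rw [← hsum]
    conv_rhs => rw [hrep]
    rw [Multiset.sum_replicate, smul_eq_mul]
  · exact hsupp

end

/-- For `g` a 3-cycle in `S_3` and `h` a nontrivial element of a finite abelian group `A`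
(in its regular permutation representation, acting by left translation),
`ind(g)·|A| = ind(g,h)` holds if and only if `ord(h) = 3`. -/
theorem stmt_7 {A : Type*} [CommGroup A] [Fintype A] [DecidableEq A]
    (g : Equiv.Perm (Fin 3)) (hg : g.IsThreeCycle) (h : A) (hh : h ≠ 1) :
    ind g * Fintype.card A = ind (g.prodCongr (Equiv.mulLeft h)) ↔ orderOf h = 3 := by
  classical
  obtain ⟨hk, hsupp⟩ := cycleCount_sigma g hg h hh
  set σ : Equiv.Perm (Fin 3 × A) := g.prodCongr (Equiv.mulLeft h) with hσdef
  set L := Nat.lcm 3 (orderOf h) with hLdef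
  set k := Multiset.card (Equiv.Perm.cycleType σ) with hkdef
  set m := Fintype.card A with hm
  have hm0 : 0 < m := Fintype.card_pos
  have hcard : Fintype.card (Fin 3 × A) = 3 * m := by rw [Fintype.card_prod, Fintype.card_fin]
  -- ind g = 2
  have hindg : ind g = 2 := by
    unfold ind cycleCount fullCycleType
    rw [hg.cycleType, hg.card_support, Fintype.card_fin]
    rfl
  -- cycleCount σ = k
  have hcc : cycleCount σ = k := by
    unfold cycleCount fullCycleType
    rw [hsupp, Finset.card_univ, Nat.sub_self, Multiset.replicate_zero, add_zero]
  have hindσ : ind σ = 3 * m - k := by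
    unfold ind
    rw [hcc, hcard]
  have hL3 : 3 ∣ L := Nat.dvd_lcm_left _ _
  have hd0 : 0 < orderOf h := orderOf_pos h
  have hL0 : 0 < L := Nat.lcm_pos (by norm_num) hd0
  have hkle : k ≤ 3 * m := by
    calc k ≤ k * L := Nat.le_mul_of_pos_right k hL0
    _ = 3 * m := hk
  rw [hindg, hindσ]
  constructor
  · intro he
    have hkm : k = m := by omega
    have : L = 3 := by
      rw [hkm] at hk
      have := Nat.eq_of_mul_eq_mul_left hm0 (by linarith [hk] : m * L = m * 3)
      exact this
    have hdvd : orderOf h ∣ 3 := this ▸ Nat.dvd_lcm_right 3 (orderOf h)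
    rcases (Nat.dvd_prime Nat.prime_three).mp hdvd with h1 | h3
    · exact absurd (orderOf_eq_one_iff.mp h1) hh
    · exact h3
  · intro hd3
    have hL3' : L = 3 := by rw [hLdef, hd3]; decide
    rw [hL3'] at hk
    omega
end
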